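/- Let P : {±1}^k → [0,1] be a generalized Boolean predicate, identified with its multilinear extension to [−1,1]^k, and let E[P] = P(0,…,0). Fix a finite set D ⊆ [−1,1] and consider a random CSP with n variables taking values in D and m = Δn uniformly random scopes of k distinct variables each, where the objective value of an assignment f is the average of P(f(S)) over the m scopes S. Let 0 ≤ ζ be such that kζ² < 1/2. Then, with probability 1 − o(1) over the random scopes, every assignment f with |avg_{x∈X} f(x)| ≤ ζ has objective value at most E[P] + η₁ + η₂, where η₁ = O(√(log|D|/Δ) + k²/n) and η₂ = O(√k · ζ). -/

import Mathlib

open Finset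

/-- Probability of an event under the uniform distribution on a finite sample space. -/
noncomputable def uprob {Ω : Type} [Fintype Ω] (p : Ω → Prop) : ℝ :=
  letI := Classical.decPred p
  ((Finset.univ.filter p).card : ℝ) / (Fintype.card Ω : ℝ)

/-- The ±1 sign encoded by a Boolean (`true ↦ +1`). -/
noncomputable def sgn (b : Bool) : ℝ := if b then 1 else -1

/-- The multilinear extension of a (generalized) predicate `P : {±1}^k → ℝ`, evaluated at
`μ ∈ [-1,1]^k`: the expectation of `P` at independent ±1 bits with means `μ_i`. -/
noncomputable def mlext {k : ℕ} (P : (Fin k → Bool) → ℝ) (μ : Fin k → ℝ) : ℝ :=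
  ∑ a : Fin k → Bool, P a * ∏ i, ((1 + sgn (a i) * μ i) / 2)

/-!
Fix an assignment `f`. Its objective value is the mean of `Δn` independent samples of
`mlext P (f ∘ e)` for a uniformly random embedding `e : Fin k ↪ Fin n`, so by Hoeffding's
inequality it exceeds its expectation by `t` with probability at most `exp (-2Δn t²)`. Up to the
`k² / n` fraction of non-injective maps (birthday bound), that expectation is the average over all
maps `Fin k → Fin n`, which by multilinearity is `P` evaluated at the constant vector `avg f`.
For `|avg f| ≤ ζ` this is at most `E[P] + √(2k) ζ`, because the `ℓ¹`-distance between the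
`μ`-biased and the uniform product measure on `{±1}^k` is at most `√((1 + μ²)^k - 1)`.
A union bound over the `|D|^n` assignments with `t = √(log |D| / Δ)` leaves a failure probability
of `|D|^(-n)`. When `|D| = 1` the only assignment is constant and the bound holds surely.
-/

open Real ProbabilityTheory MeasureTheory

section UniformProbability

variable {Ω : Type} [Fintype Ω]

lemma uprob_eq_card (p : Ω → Prop) [DecidablePred p] :
    uprob p = (univ.filter p).card / Fintype.card Ω := by
  unfold uprob
  congr

lemma uprob_eq_uniformOn_real [MeasurableSpace Ω] [MeasurableSingletonClass Ω] (p : Ω → Prop) :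
    uprob p = (uniformOn (Set.univ : Set Ω)).real {ω | p ω} := by
  classical
  rw [uprob, measureReal_def, uniformOn_univ, ← coe_filter_univ, Measure.count_apply_finset,
    ENNReal.toReal_div]
  simp

lemma uprob_mono {p q : Ω → Prop} (h : ∀ ω, p ω → q ω) : uprob p ≤ uprob q := by
  classical
  rw [uprob_eq_card, uprob_eq_card]
  gcongr
  exact h _

lemma uprob_of_forall [Nonempty Ω] {p : Ω → Prop} (h : ∀ ω, p ω) : uprob p = 1 := by
  classical
  rw [uprob_eq_card, filter_true_of_mem fun ω _ => h ω, card_univ, div_self (by positivity)]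

lemma uprob_eq_one_sub_uprob_not [Nonempty Ω] (p : Ω → Prop) :
    uprob p = 1 - uprob (fun ω => ¬ p ω) := by
  classical
  rw [uprob_eq_card, uprob_eq_card, eq_sub_iff_add_eq, ← add_div,
    div_eq_one_iff_eq (by positivity), ← Finset.card_univ]
  exact_mod_cast card_filter_add_card_filter_not (s := univ) p

lemma uprob_exists_le {ι : Type} [Fintype ι] (q : ι → Ω → Prop) :
    uprob (fun ω => ∃ i, q i ω) ≤ ∑ i, uprob (q i) := by
  classical
  simp only [uprob_eq_card, ← Finset.sum_div]
  gcongr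
  calc ((univ.filter fun ω => ∃ i, q i ω).card : ℝ)
      ≤ (univ.biUnion fun i => univ.filter (q i)).card := by
        gcongr
        intro ω
        simp
    _ ≤ ∑ i, ((univ.filter (q i)).card : ℝ) := by exact_mod_cast card_biUnion_le

end UniformProbability

lemma uprob_hoeffding {E : Type} [Fintype E] [Nonempty E] (m : ℕ) (G : E → ℝ)
    (hG : ∀ e, G e ∈ Set.Icc (0 : ℝ) 1) {t : ℝ} (ht : 0 ≤ t) :
    uprob (fun ω : Fin m → E => m * ((∑ e, G e) / Fintype.card E + t) ≤ ∑ j, G (ω j))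
      ≤ exp (-2 * m * t ^ 2) := by
  let _ : MeasurableSpace E := ⊤
  have : DiscreteMeasurableSpace E := ⟨fun _ => trivial⟩
  set ν := uniformOn (Set.univ : Set E)
  have hν : ν[G] = (∑ e, G e) / Fintype.card E := by
    rw [integral_fintype (.of_finite)]
    simp [ν, measureReal_def, uniformOn_univ, ← Finset.mul_sum, div_eq_inv_mul]
  have hpi : uniformOn (Set.univ : Set (Fin m → E)) = Measure.pi fun _ => ν := by
    rw [← uniformOn_pi, Set.pi_univ]
  have hsub : ∀ j : Fin m, HasSubgaussianMGF (fun ω : Fin m → E => G (ω j) - ν[G])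
      ((‖(1 : ℝ) - 0‖₊ / 2) ^ 2) (Measure.pi fun _ => ν) := by
    intro j
    have h := hasSubgaussianMGF_of_mem_Icc (μ := ν) (X := G) (Measurable.of_discrete).aemeasurable
      (ae_of_all _ hG)
    have h' : HasSubgaussianMGF (fun e => G e - ν[G]) ((‖(1 : ℝ) - 0‖₊ / 2) ^ 2)
        ((Measure.pi fun _ : Fin m => ν).map (Function.eval j)) := by
      rwa [(measurePreserving_eval (fun _ : Fin m => ν) j).map_eq]
    exact h'.of_map (measurable_pi_apply j).aemeasurable |>.congr (ae_of_all _ fun _ => rfl)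
  have hind : iIndepFun (fun (j : Fin m) (ω : Fin m → E) => G (ω j) - ν[G])
      (Measure.pi fun _ => ν) :=
    iIndepFun_pi (X := fun _ e => G e - ν[G]) fun _ => (Measurable.of_discrete).aemeasurable
  have key := HasSubgaussianMGF.measure_sum_ge_le_of_iIndepFun hind (s := univ) (fun j _ => hsub j)
    (ε := m * t) (by positivity)
  have hset : {ω : Fin m → E | m * ((∑ e, G e) / Fintype.card E + t) ≤ ∑ j, G (ω j)}
      = {ω | m * t ≤ ∑ j, (G (ω j) - ν[G])} := by
    ext ω
    simp only [Set.mem_ofPred_eq, sum_sub_distrib, sum_const, card_univ, Fintype.card_fin,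
      nsmul_eq_mul, hν]
    constructor <;> intro h <;> linarith
  have hexp : -(m * t) ^ 2 / (2 * (m * (2 ^ 2 : ℝ)⁻¹)) = -(2 * m * t ^ 2) := by
    rcases Nat.eq_zero_or_pos m with rfl | hm
    · simp
    · field_simp
  rw [uprob_eq_uniformOn_real, hpi, hset]
  simpa [hexp] using key

lemma one_add_pow_le_one_add_two_mul {y : ℝ} (hy : 0 ≤ y) {k : ℕ} (hky : k * y ≤ 1 / 2) :
    (1 + y) ^ k ≤ 1 + 2 * (k * y) := by
  have hky0 : 0 ≤ k * y := by positivity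
  calc (1 + y) ^ k ≤ exp y ^ k := by gcongr; linarith [add_one_le_exp y]
    _ = exp (k * y) := (exp_nat_mul y k).symm
    _ ≤ 1 / (1 - k * y) := exp_bound_div_one_sub_of_interval hky0 (by linarith)
    _ ≤ 1 + 2 * (k * y) := by
      rw [div_le_iff₀ (by linarith)]
      nlinarith

lemma one_add_sgn_mul_nonneg (b : Bool) {x : ℝ} (hx : x ∈ Set.Icc (-1 : ℝ) 1) :
    0 ≤ 1 + sgn b * x := by
  cases b <;> norm_num [sgn] <;> linarith [hx.1, hx.2]

lemma sum_bool_one_add_sgn_mul_div_two (x : ℝ) : ∑ b : Bool, (1 + sgn b * x) / 2 = 1 := by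
  simp only [Fintype.sum_bool, sgn, ite_true, Bool.false_eq_true, ite_false]
  ring

lemma sum_bool_one_add_sgn_mul_div_two_sq (x : ℝ) :
    ∑ b : Bool, ((1 + sgn b * x) / 2) ^ 2 = (1 + x ^ 2) / 2 := by
  simp only [Fintype.sum_bool, sgn, ite_true, Bool.false_eq_true, ite_false]
  ring

lemma sum_one_add_sgn_mul_div_two_eq_card_mul {α : Type*} [Fintype α] (b : Bool) (f : α → ℝ) :
    ∑ v, (1 + sgn b * f v) / 2
      = Fintype.card α * ((1 + sgn b * ((∑ v, f v) / Fintype.card α)) / 2) := by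
  rcases isEmpty_or_nonempty α with hα | hα
  · simp
  · rw [← sum_div, sum_add_distrib, ← mul_sum]
    simp only [sum_const, card_univ, nsmul_eq_mul, mul_one]
    field_simp

noncomputable def mlweight {k : ℕ} (μ : Fin k → ℝ) (a : Fin k → Bool) : ℝ :=
  ∏ i, (1 + sgn (a i) * μ i) / 2

section Mlext

variable {k : ℕ}

lemma mlweight_nonneg {μ : Fin k → ℝ} (hμ : ∀ i, μ i ∈ Set.Icc (-1 : ℝ) 1) (a : Fin k → Bool) :
    0 ≤ mlweight μ a :=
  prod_nonneg fun i _ => div_nonneg (one_add_sgn_mul_nonneg _ (hμ i)) zero_le_two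

lemma sum_mlweight (μ : Fin k → ℝ) : ∑ a, mlweight μ a = 1 := by
  simp only [mlweight]
  rw [← Fintype.prod_sum fun i b => (1 + sgn b * μ i) / 2]
  simp only [sum_bool_one_add_sgn_mul_div_two, prod_const_one]

lemma mlweight_zero (a : Fin k → Bool) : mlweight (fun _ => 0) a = (1 / 2) ^ k := by
  simp [mlweight]

lemma sum_mlweight_const_sq (x : ℝ) :
    ∑ a, mlweight (fun _ : Fin k => x) a ^ 2 = ((1 + x ^ 2) / 2) ^ k := by
  simp only [mlweight, ← prod_pow]
  rw [← Fintype.prod_sum fun _ b => ((1 + sgn b * x) / 2) ^ 2]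
  simp only [sum_bool_one_add_sgn_mul_div_two_sq, prod_const, card_univ, Fintype.card_fin]

lemma mlext_eq_sum_mlweight (P : (Fin k → Bool) → ℝ) (μ : Fin k → ℝ) :
    mlext P μ = ∑ a, P a * mlweight μ a := rfl

lemma mlext_mem_Icc {P : (Fin k → Bool) → ℝ} (hP : ∀ a, P a ∈ Set.Icc (0 : ℝ) 1)
    {μ : Fin k → ℝ} (hμ : ∀ i, μ i ∈ Set.Icc (-1 : ℝ) 1) : mlext P μ ∈ Set.Icc (0 : ℝ) 1 := by
  rw [mlext_eq_sum_mlweight]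
  refine ⟨sum_nonneg fun a _ => mul_nonneg (hP a).1 (mlweight_nonneg hμ a), ?_⟩
  calc ∑ a, P a * mlweight μ a ≤ ∑ a, mlweight μ a :=
        sum_le_sum fun a _ => mul_le_of_le_one_left (mlweight_nonneg hμ a) (hP a).2
    _ = 1 := sum_mlweight μ

lemma mlext_sub_le_sum_abs {P : (Fin k → Bool) → ℝ} (hP : ∀ a, P a ∈ Set.Icc (0 : ℝ) 1)
    (μ ν : Fin k → ℝ) :
    mlext P μ - mlext P ν ≤ ∑ a, |mlweight μ a - mlweight ν a| := by
  rw [mlext_eq_sum_mlweight, mlext_eq_sum_mlweight, ← sum_sub_distrib]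
  refine sum_le_sum fun a _ => ?_
  rw [← mul_sub]
  calc P a * (mlweight μ a - mlweight ν a) ≤ |P a * (mlweight μ a - mlweight ν a)| := le_abs_self _
    _ = P a * |mlweight μ a - mlweight ν a| := by rw [abs_mul, abs_of_nonneg (hP a).1]
    _ ≤ |mlweight μ a - mlweight ν a| := mul_le_of_le_one_left (abs_nonneg _) (hP a).2

/-- By Cauchy–Schwarz, the squared `ℓ¹`-distance between the biased and the uniform product
measure is at most their `χ²`-distance `(1 + x²)^k - 1`. -/
lemma sum_abs_mlweight_const_sub_sq_le (x : ℝ) :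
    (∑ a, |mlweight (fun _ : Fin k => x) a - mlweight (fun _ => 0) a|) ^ 2
      ≤ (1 + x ^ 2) ^ k - 1 := by
  calc (∑ a, |mlweight (fun _ : Fin k => x) a - mlweight (fun _ => 0) a|) ^ 2
      ≤ (univ : Finset (Fin k → Bool)).card
          * ∑ a, |mlweight (fun _ : Fin k => x) a - mlweight (fun _ => 0) a| ^ 2 :=
        sq_sum_le_card_mul_sum_sq
    _ = (1 + x ^ 2) ^ k - 1 := by
      simp only [sq_abs, sub_sq, sum_add_distrib, sum_sub_distrib, mlweight_zero,
        sum_mlweight_const_sq, ← sum_mul, ← mul_sum, sum_mlweight, sum_const, card_univ,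
        Fintype.card_fun, Fintype.card_bool, Fintype.card_fin, nsmul_eq_mul]
      push_cast
      rw [div_pow, one_div, inv_pow]
      field_simp
      ring

lemma mlext_const_le {P : (Fin k → Bool) → ℝ} (hP : ∀ a, P a ∈ Set.Icc (0 : ℝ) 1)
    {x : ℝ} (hx : k * x ^ 2 ≤ 1 / 2) :
    mlext P (fun _ => x) ≤ mlext P (fun _ => 0) + √(2 * k) * |x| := by
  have hL1 : ∑ a, |mlweight (fun _ : Fin k => x) a - mlweight (fun _ => 0) a| ≤ √(2 * k) * |x| := by
    rw [← sqrt_sq_eq_abs, ← sqrt_mul (by positivity)]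
    refine (le_abs_self _).trans (abs_le_sqrt ?_)
    calc _ ≤ (1 + x ^ 2) ^ k - 1 := sum_abs_mlweight_const_sub_sq_le x
      _ ≤ 2 * k * x ^ 2 := by
        linarith [one_add_pow_le_one_add_two_mul (sq_nonneg x) hx]
  linarith [mlext_sub_le_sum_abs hP (fun _ => x) (fun _ => 0)]

lemma mlext_const_le_of_abs_le {P : (Fin k → Bool) → ℝ}
    (hP : ∀ a, P a ∈ Set.Icc (0 : ℝ) 1) {x ζ : ℝ} (hx : |x| ≤ ζ) (hζ : k * ζ ^ 2 ≤ 1 / 2) :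
    mlext P (fun _ => x) ≤ mlext P (fun _ => 0) + √(2 * k) * ζ := by
  have hx2 : k * x ^ 2 ≤ 1 / 2 := by
    have : x ^ 2 ≤ ζ ^ 2 := by rw [← sq_abs]; gcongr
    nlinarith [(Nat.cast_nonneg k : (0 : ℝ) ≤ k)]
  calc mlext P (fun _ => x) ≤ mlext P (fun _ => 0) + √(2 * k) * |x| := mlext_const_le hP hx2
    _ ≤ mlext P (fun _ => 0) + √(2 * k) * ζ := by gcongr

lemma sum_mlext_comp {α : Type*} [Fintype α] (P : (Fin k → Bool) → ℝ) (f : α → ℝ) :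
    ∑ x : Fin k → α, mlext P (fun i => f (x i))
      = Fintype.card α ^ k * mlext P (fun _ => (∑ v, f v) / Fintype.card α) := by
  classical
  simp only [mlext, mul_sum]
  rw [sum_comm]
  refine sum_congr rfl fun a _ => ?_
  rw [← mul_sum, ← Fintype.prod_sum fun i v => (1 + sgn (a i) * f v) / 2, mul_left_comm]
  simp only [sum_one_add_sgn_mul_div_two_eq_card_mul, prod_mul_distrib, prod_const, card_univ,
    Fintype.card_fin]

end Mlext

lemma sum_div_card_le_of_subset {ι : Type*} {s t : Finset ι} (hst : s ⊆ t) {g : ι → ℝ}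
    (h0 : ∀ i ∈ t, 0 ≤ g i) (h1 : ∀ i ∈ s, g i ≤ 1) :
    (∑ i ∈ s, g i) / #s ≤ (∑ i ∈ t, g i) / #t + (#t - #s) / #t := by
  have hcard : (#s : ℝ) ≤ #t := by exact_mod_cast card_le_card hst
  rcases s.eq_empty_or_nonempty with rfl | hs
  · simp only [sum_empty, card_empty, CharP.cast_eq_zero, div_zero, sub_zero]
    exact add_nonneg (div_nonneg (sum_nonneg h0) (Nat.cast_nonneg _)) (by positivity)
  have hs0 : (0 : ℝ) < #s := by exact_mod_cast hs.card_pos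
  have hsum_s : ∑ i ∈ s, g i ≤ #s := by
    simpa using sum_le_sum h1
  have hsum_st : ∑ i ∈ s, g i ≤ ∑ i ∈ t, g i :=
    sum_le_sum_of_subset_of_nonneg hst fun i hi _ => h0 i hi
  rw [← add_div, div_le_div_iff₀ hs0 (by linarith)]
  nlinarith [mul_le_mul_of_nonneg_right hsum_s (sub_nonneg.mpr hcard)]

/-- The birthday bound: all but a `k² / n` fraction of the maps `Fin k → Fin n` are injective. -/
lemma pow_sub_descFactorial_div_pow_le {n k : ℕ} (hkn : k ≤ n) :
    ((n : ℝ) ^ k - n.descFactorial k) / (n : ℝ) ^ k ≤ (k : ℝ) ^ 2 / n := by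
  rcases Nat.eq_zero_or_pos n with rfl | hn
  · obtain rfl : k = 0 := by omega
    simp
  have hn' : (0 : ℝ) < n := by exact_mod_cast hn
  have hkn' : (k : ℝ) ≤ n := by exact_mod_cast hkn
  have hbern := one_add_mul_le_pow (a := (1 - k) / (n : ℝ)) (by
    rw [le_div_iff₀ hn']
    linarith) k
  have hdesc : ((n + 1 - k : ℕ) : ℝ) ^ k ≤ n.descFactorial k := by
    exact_mod_cast Nat.pow_sub_le_descFactorial n k
  have hcast : ((n + 1 - k : ℕ) : ℝ) = n * (1 + (1 - k) / n) := by
    rw [Nat.cast_sub (by omega)]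
    push_cast
    field_simp
    ring
  have hmain : (n : ℝ) ^ k * (1 - k ^ 2 / n) ≤ n.descFactorial k := by
    rw [hcast, mul_pow] at hdesc
    refine le_trans ?_ ((mul_le_mul_of_nonneg_left hbern (by positivity)).trans hdesc)
    gcongr
    have : (0 : ℝ) ≤ k / n := by positivity
    linarith [show k * ((1 - k) / (n : ℝ)) = k / n - k ^ 2 / n by ring]
  rw [div_le_iff₀ (by positivity)]
  linarith

lemma sum_embedding_div_card_le {k n : ℕ} (hkn : k ≤ n) {g : (Fin k → Fin n) → ℝ}
    (hg : ∀ x, g x ∈ Set.Icc (0 : ℝ) 1) :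
    (∑ e : Fin k ↪ Fin n, g e) / Fintype.card (Fin k ↪ Fin n)
      ≤ (∑ x, g x) / (n : ℝ) ^ k + (k : ℝ) ^ 2 / n := by
  let coeFn : (Fin k ↪ Fin n) ↪ (Fin k → Fin n) := ⟨fun e => ⇑e, DFunLike.coe_injective⟩
  have h := sum_div_card_le_of_subset (subset_univ (univ.map coeFn))
    (fun x _ => (hg x).1) (fun x _ => (hg x).2)
  rw [sum_map, card_map, card_univ, card_univ, Fintype.card_fun, Fintype.card_fin,
    Fintype.card_fin, Fintype.card_embedding_eq, Fintype.card_fin, Fintype.card_fin] at h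
  push_cast at h
  rw [Fintype.card_embedding_eq, Fintype.card_fin, Fintype.card_fin]
  exact h.trans (add_le_add le_rfl (pow_sub_descFactorial_div_pow_le hkn))

noncomputable def objective {k n m : ℕ} (P : (Fin k → Bool) → ℝ) (ω : Fin m → (Fin k ↪ Fin n))
    (f : Fin n → ℝ) : ℝ :=
  (∑ j, mlext P (fun i => f (ω j i))) / m

lemma uprob_mlext_add_lt_objective_le {k n m : ℕ} (hkn : k ≤ n) (hm : 0 < m)
    {P : (Fin k → Bool) → ℝ} (hP : ∀ a, P a ∈ Set.Icc (0 : ℝ) 1) {f : Fin n → ℝ}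
    (hf : ∀ x, f x ∈ Set.Icc (-1 : ℝ) 1) {t : ℝ} (ht : 0 ≤ t) :
    uprob (fun ω : Fin m → (Fin k ↪ Fin n) =>
        mlext P (fun _ => (∑ x, f x) / n) + (k : ℝ) ^ 2 / n + t < objective P ω f)
      ≤ exp (-2 * m * t ^ 2) := by
  have : Nonempty (Fin k ↪ Fin n) := ⟨Fin.castLEEmb hkn⟩
  have hG : ∀ x : Fin k → Fin n, mlext P (fun i => f (x i)) ∈ Set.Icc (0 : ℝ) 1 :=
    fun x => mlext_mem_Icc hP fun i => hf (x i)
  have hnk : (n : ℝ) ^ k ≠ 0 := by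
    rcases n.eq_zero_or_pos with rfl | hn
    · obtain rfl : k = 0 := by omega
      simp
    · positivity
  have hmean := sum_embedding_div_card_le hkn hG
  rw [sum_mlext_comp, Fintype.card_fin, mul_div_cancel_left₀ _ hnk] at hmean
  refine (uprob_mono fun ω hω => ?_).trans
    (uprob_hoeffding m (fun e : Fin k ↪ Fin n => mlext P (fun i => f (e i))) (fun e => hG e) ht)
  rw [objective, lt_div_iff₀ (by positivity)] at hω
  have hm' : (0 : ℝ) ≤ m := by positivity
  nlinarith

lemma objective_le_of_card_eq_one {k n m : ℕ} (hn : 0 < n) (hm : 0 < m)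
    {P : (Fin k → Bool) → ℝ} (hP : ∀ a, P a ∈ Set.Icc (0 : ℝ) 1) {D : Finset ℝ} (hD : #D = 1)
    {ζ : ℝ} (hζ : k * ζ ^ 2 ≤ 1 / 2) (ω : Fin m → (Fin k ↪ Fin n)) {f : Fin n → ℝ}
    (hf : ∀ x, f x ∈ D) (havg : |(∑ x, f x) / n| ≤ ζ) :
    objective P ω f ≤ mlext P (fun _ => 0) + √(2 * k) * ζ := by
  obtain ⟨d, rfl⟩ := card_eq_one.mp hD
  have hfd : f = fun _ => d := funext fun x => mem_singleton.mp (hf x)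
  subst hfd
  have hn' : (n : ℝ) ≠ 0 := by positivity
  have hm' : (m : ℝ) ≠ 0 := by positivity
  simp only [sum_const, card_univ, Fintype.card_fin, nsmul_eq_mul, ne_eq, hn', not_false_eq_true,
    mul_div_cancel_left₀] at havg
  simp only [objective, sum_const, card_univ, Fintype.card_fin, nsmul_eq_mul, ne_eq, hm',
    not_false_eq_true, mul_div_cancel_left₀]
  exact mlext_const_le_of_abs_le hP havg hζ

lemma one_sub_inv_card_pow_le_uprob {k n Δ : ℕ} (hkn : k ≤ n) (hn : 0 < n) (hΔ : 0 < Δ)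
    {P : (Fin k → Bool) → ℝ} (hP : ∀ a, P a ∈ Set.Icc (0 : ℝ) 1) {D : Finset ℝ}
    (hD : ∀ d ∈ D, d ∈ Set.Icc (-1 : ℝ) 1) {ζ : ℝ} (hζ : k * ζ ^ 2 ≤ 1 / 2) :
    1 - ((#D : ℝ) ^ n)⁻¹ ≤ uprob (fun ω : Fin (Δ * n) → (Fin k ↪ Fin n) =>
      ∀ f : Fin n → ℝ, (∀ x, f x ∈ D) → |(∑ x, f x) / n| ≤ ζ →
        objective P ω f
          ≤ mlext P (fun _ => 0) + (√(log #D / Δ) + (k : ℝ) ^ 2 / n) + √(2 * k) * ζ) := by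
  have : Nonempty (Fin k ↪ Fin n) := ⟨Fin.castLEEmb hkn⟩
  -- the deviation at which the union bound over the `|D|^n` assignments costs `|D|^(-n)`
  set t := √(log #D / Δ)
  have hbad : ∀ ω : Fin (Δ * n) → (Fin k ↪ Fin n),
      ¬ (∀ f : Fin n → ℝ, (∀ x, f x ∈ D) → |(∑ x, f x) / n| ≤ ζ →
        objective P ω f ≤ mlext P (fun _ => 0) + (t + (k : ℝ) ^ 2 / n) + √(2 * k) * ζ) →
      ∃ σ : Fin n → D, mlext P (fun _ => (∑ x, (σ x : ℝ)) / n) + (k : ℝ) ^ 2 / n + t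
        < objective P ω (fun x => σ x) := by
    intro ω hω
    push Not at hω
    obtain ⟨f, hf, havg, hobj⟩ := hω
    refine ⟨fun x => ⟨f x, hf x⟩, ?_⟩
    linarith [mlext_const_le_of_abs_le hP havg hζ]
  have hcount : ∑ _σ : Fin n → D, exp (-2 * (Δ * n : ℕ) * t ^ 2) = ((#D : ℝ) ^ n)⁻¹ := by
    rw [sum_const, card_univ, Fintype.card_fun, Fintype.card_fin, Fintype.card_coe, nsmul_eq_mul]
    rcases (#D).eq_zero_or_pos with hD0 | hD0
    · simp [hD0, hn.ne']
    have hexp : exp (-2 * (Δ * n : ℕ) * t ^ 2) = (((#D : ℝ) ^ n) ^ 2)⁻¹ := by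
      rw [sq_sqrt (by positivity), ← pow_mul, ← exp_log (by positivity : (0 : ℝ) < #D),
        ← exp_nat_mul, ← exp_neg, exp_log (by positivity)]
      push_cast
      field_simp
    rw [hexp, sq, mul_inv, ← mul_assoc, Nat.cast_pow, mul_inv_cancel₀ (by positivity), one_mul]
  rw [uprob_eq_one_sub_uprob_not]
  refine sub_le_sub_left ?_ 1
  calc _ ≤ uprob (fun ω : Fin (Δ * n) → (Fin k ↪ Fin n) => ∃ σ : Fin n → D,
          mlext P (fun _ => (∑ x, (σ x : ℝ)) / n) + (k : ℝ) ^ 2 / n + t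
            < objective P ω (fun x => σ x)) := uprob_mono hbad
    _ ≤ ∑ σ : Fin n → D, uprob (fun ω : Fin (Δ * n) → (Fin k ↪ Fin n) =>
          mlext P (fun _ => (∑ x, (σ x : ℝ)) / n) + (k : ℝ) ^ 2 / n + t
            < objective P ω (fun x => σ x)) := uprob_exists_le _
    _ ≤ ∑ _σ : Fin n → D, exp (-2 * (Δ * n : ℕ) * t ^ 2) :=
        sum_le_sum fun σ _ => uprob_mlext_add_lt_objective_le hkn (by positivity) hP
          (fun x => hD _ (σ x).2) (by positivity)
    _ = ((#D : ℝ) ^ n)⁻¹ := hcount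

lemma inv_pow_le_half_pow {d : ℕ} (hd : d ≠ 1) {n : ℕ} (hn : n ≠ 0) :
    ((d : ℝ) ^ n)⁻¹ ≤ (1 / 2) ^ n := by
  rcases d.eq_zero_or_pos with rfl | hd0
  · simp [hn]
  rw [one_div, inv_pow]
  gcongr
  exact_mod_cast (by omega : 2 ≤ d)

lemma one_sub_half_pow_le_uprob {k n Δ : ℕ} (hkn : k ≤ n) (hn : 0 < n) (hΔ : 0 < Δ)
    {P : (Fin k → Bool) → ℝ} (hP : ∀ a, P a ∈ Set.Icc (0 : ℝ) 1) {D : Finset ℝ}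
    (hD : ∀ d ∈ D, d ∈ Set.Icc (-1 : ℝ) 1) {ζ : ℝ} (hζ : k * ζ ^ 2 ≤ 1 / 2) :
    1 - (1 / 2) ^ n ≤ uprob (fun ω : Fin (Δ * n) → (Fin k ↪ Fin n) =>
      ∀ f : Fin n → ℝ, (∀ x, f x ∈ D) → |(∑ x, f x) / n| ≤ ζ →
        objective P ω f
          ≤ mlext P (fun _ => 0) + (√(log #D / Δ) + (k : ℝ) ^ 2 / n) + √(2 * k) * ζ) := by
  rcases eq_or_ne #D 1 with hD1 | hD1
  · have : Nonempty (Fin k ↪ Fin n) := ⟨Fin.castLEEmb hkn⟩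
    rw [uprob_of_forall]
    · linarith [pow_pos (by norm_num : (0 : ℝ) < 1 / 2) n]
    intro ω f hf havg
    have := objective_le_of_card_eq_one hn (by positivity) hP hD1 hζ ω hf havg
    have : 0 ≤ √(log #D / Δ) + (k : ℝ) ^ 2 / n := by positivity
    linarith
  · refine le_trans ?_ (one_sub_inv_card_pow_le_uprob hkn hn hΔ hP hD hζ)
    linarith [inv_pow_le_half_pow hD1 hn.ne']

/-- with high probability over a random CSP with values in a finite set
D ⊆ [-1,1], every assignment whose average value is at most ζ in absolute value has objective
value at most E[P] + η₁ + η₂. -/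
theorem stmt14 :
    ∃ C1 C2 : ℝ, 0 < C1 ∧ 0 < C2 ∧
      ∀ (k : ℕ), 0 < k →
        ∀ (P : (Fin k → Bool) → ℝ), (∀ a, P a ∈ Set.Icc (0 : ℝ) 1) →
          ∀ (D : Finset ℝ), (∀ d ∈ D, d ∈ Set.Icc (-1 : ℝ) 1) →
            ∀ (Δ : ℕ), 0 < Δ →
              ∀ ζ : ℝ, 0 ≤ ζ → (k : ℝ) * ζ ^ 2 < 1 / 2 →
                ∀ δ : ℝ, 0 < δ →
                  ∃ N : ℕ, ∀ n : ℕ, N ≤ n →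
                    1 - δ ≤
                      uprob (fun ω : Fin (Δ * n) → (Fin k ↪ Fin n) =>
                        ∀ f : Fin n → ℝ, (∀ x, f x ∈ D) →
                          |(∑ x, f x) / (n : ℝ)| ≤ ζ →
                          (∑ j : Fin (Δ * n), mlext P (fun i => f (ω j i)))
                              / ((Δ * n : ℕ) : ℝ)
                            ≤ mlext P (fun _ => 0)
                              + C1 * (Real.sqrt (Real.log (D.card) / (Δ : ℝ))
                                  + (k : ℝ) ^ 2 / (n : ℝ))
                              + C2 * (Real.sqrt (k : ℝ) * ζ)) := by
  refine ⟨1, √2, one_pos, by positivity, ?_⟩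
  intro k _ P hP D hD Δ hΔ ζ _ hkζ δ hδ
  obtain ⟨N, hN⟩ := exists_pow_lt_of_lt_one hδ (by norm_num : (1 / 2 : ℝ) < 1)
  refine ⟨N + k + 1, fun n hn => ?_⟩
  have hhalf : (1 / 2 : ℝ) ^ n ≤ (1 / 2) ^ N :=
    pow_le_pow_of_le_one (by norm_num) (by norm_num) (by omega)
  refine le_trans (by linarith) (one_sub_half_pow_le_uprob (by omega) (by omega) hΔ hP hD hkζ.le)
    |>.trans (uprob_mono fun ω h f hf havg => ?_)
  rw [one_mul, ← mul_assoc, ← sqrt_mul zero_le_two]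
  exact h f hf havg
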